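/- Let G be a finite connected network with vertices u != v and let P_1,...,P_k be collections of u-v paths such that every path from u to v belongs to the union of the P_i. Then the effective conductance satisfies C_G(u,v) <= sum_{i=1}^k R_G(P_i)^{-1}. -/

import Mathlib

open Finset

variable {V : Type} [Fintype V] [DecidableEq V]

/-- `p` is a path from `u` to `v`. -/
def IsPathBetween (adj : V → V → Prop) (u v : V) (p : List V) : Prop :=
  p ≠ [] ∧ p.head? = some u ∧ p.getLast? = some v ∧ p.Chain' adj

/-- The effective conductance between `u` and `v`, via the Dirichlet variational formula:
the infimum over potentials `F` with `F u = 1`, `F v = 0` of the Dirichlet energy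
(each unoriented edge counted once; conductances are `c x y = (r x y)⁻¹`). -/
noncomputable def effCond (adj : V → V → Prop) [DecidableRel adj] (r : V → V → ℝ)
    (u v : V) : ℝ :=
  sInf { E : ℝ | ∃ F : V → ℝ, F u = 1 ∧ F v = 0 ∧
    E = (1 / 2) * ∑ x, ∑ y, (if adj x y then (r x y)⁻¹ else 0) * (F x - F y) ^ 2 }

/-- Sum of `w` over the consecutive edges of the path `p`. -/
noncomputable def pathSum (p : List V) (w : V → V → ℝ) : ℝ :=
  ((p.zip p.tail).map fun e => w e.1 e.2).sum

/-- The effective resistance restricted to a collection `Ps` of paths. -/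
noncomputable def restrictedResP (adj : V → V → Prop) (r : V → V → ℝ)
    (Ps : Finset (List V)) : ℝ :=
  sInf { y : ℝ | ∃ rP : List V → V → V → ℝ,
    (∀ p ∈ Ps, ∀ x y, adj x y → 0 < rP p x y) ∧
    (∀ p ∈ Ps, ∀ x y, rP p x y = rP p y x) ∧
    (∀ x y, adj x y → ∑ p ∈ Ps, (rP p x y)⁻¹ ≤ (r x y)⁻¹) ∧
    y = (∑ p ∈ Ps, (pathSum p (rP p))⁻¹)⁻¹ }

open Filter Topology

/-!
Let `F` minimise the Dirichlet energy subject to `F u = 1`, `F v = 0` (it exists by compactness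
once competitors are truncated to `[0, 1]`). It is harmonic off `{u, v}`, so its current
`θ = c ∇F` is a flow from `u` to `v` of strength `E(F) ≥ C(u, v)`. As `θ` runs strictly downhill
in `F`, it is acyclic and decomposes into simple `u`–`v` paths `γ_j` with weights `a_j` summing
to `E(F)`; assign each `γ_j` to a collection `P_i` containing it. For `t < 1`, giving `γ_j` the
conductance `t a_j / |ΔF|` on each of its edges (plus a positive share of what is left) is an
admissible splitting for `P_i`, and in it `γ_j` has resistance at most `1 / (t a_j)` because
`ΔF` telescopes to `1` along `γ_j`. Hence `R(P_i)⁻¹ ≥ t ∑_{j ↦ i} a_j`; let `t → 1` and sum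
over `i`.
-/

section Paths

variable {α : Type}

def pathEdges (p : List α) : List (α × α) := p.zip p.tail

@[simp] lemma pathEdges_nil : pathEdges ([] : List α) = [] := rfl

@[simp] lemma pathEdges_singleton (x : α) : pathEdges [x] = [] := rfl

@[simp] lemma pathEdges_cons_cons (x y : α) (t : List α) :
    pathEdges (x :: y :: t) = (x, y) :: pathEdges (y :: t) := rfl

lemma pathSum_eq_sum_map_pathEdges (p : List α) (w : α → α → ℝ) :
    pathSum p w = ((pathEdges p).map fun e => w e.1 e.2).sum := rfl

lemma List.IsChain.rel_of_mem_pathEdges {R : α → α → Prop} :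
    ∀ {p : List α}, p.IsChain R → ∀ {e : α × α}, e ∈ pathEdges p → R e.1 e.2
  | [], _, _, he | [_], _, _, he => by simp at he
  | x :: y :: t, hp, e, he => by
    rw [List.isChain_cons_cons] at hp
    rcases List.mem_cons.1 he with rfl | he
    exacts [hp.1, hp.2.rel_of_mem_pathEdges he]

lemma pathEdges_ne_nil {p : List α} {a b : α} (ha : p.head? = some a) (hb : p.getLast? = some b)
    (hab : a ≠ b) : pathEdges p ≠ [] := by
  match p with
  | [] => simp at ha
  | [x] => simp_all
  | x :: y :: t => simp

lemma List.Nodup.pathEdges {p : List α} (hp : p.Nodup) : (pathEdges p).Nodup :=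
  .of_map Prod.snd <| by
    rw [_root_.pathEdges, List.map_snd_zip (by simp)]
    exact hp.sublist (List.tail_sublist p)

lemma pathSum_le_pathSum {p : List α} {w w' : α → α → ℝ}
    (h : ∀ e ∈ pathEdges p, w e.1 e.2 ≤ w' e.1 e.2) : pathSum p w ≤ pathSum p w' :=
  List.sum_le_sum h

lemma pathSum_congr {p : List α} {w w' : α → α → ℝ}
    (h : ∀ e ∈ pathEdges p, w e.1 e.2 = w' e.1 e.2) : pathSum p w = pathSum p w' :=
  congrArg List.sum (List.map_congr_left h)

lemma pathSum_nonneg {p : List α} {w : α → α → ℝ} (h : ∀ e ∈ pathEdges p, 0 ≤ w e.1 e.2) :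
    0 ≤ pathSum p w :=
  List.sum_nonneg fun _ hz => by
    obtain ⟨e, he, rfl⟩ := List.mem_map.1 hz
    exact h e he

lemma pathSum_pos {p : List α} {w : α → α → ℝ} (hp : pathEdges p ≠ [])
    (h : ∀ e ∈ pathEdges p, 0 < w e.1 e.2) : 0 < pathSum p w :=
  List.sum_pos _ (fun _ hz => by
    obtain ⟨e, he, rfl⟩ := List.mem_map.1 hz
    exact h e he) (List.map_eq_nil_iff.not.2 hp)

lemma pathSum_mul_left (p : List α) (c : ℝ) (w : α → α → ℝ) :
    pathSum p (fun x y => c * w x y) = c * pathSum p w :=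
  List.sum_map_mul_left _ _ _

lemma pathSum_sub_eq (G : α → ℝ) : ∀ {p : List α} {a b : α}, p.head? = some a →
    p.getLast? = some b → pathSum p (fun x y => G x - G y) = G a - G b
  | [], _, _, ha, _ => by simp at ha
  | [x], _, _, ha, hb => by simp_all [pathSum]
  | x :: y :: t, a, b, ha, hb => by
    simp only [List.head?_cons, Option.some.injEq] at ha
    rw [List.getLast?_cons_cons] at hb
    have ih := pathSum_sub_eq G (p := y :: t) rfl hb
    rw [pathSum_eq_sum_map_pathEdges] at ih ⊢
    simp only [pathEdges_cons_cons, List.map_cons, List.sum_cons, ih, ← ha]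
    ring

lemma List.IsChain.nodup_of_lt {F : α → ℝ} {p : List α} (hp : p.IsChain fun x y => F y < F x) :
    p.Nodup :=
  have : Trans (fun x y => F y < F x) (fun x y => F y < F x) (fun x y => F y < F x) :=
    ⟨fun hab hbc => hbc.trans hab⟩
  (List.isChain_iff_pairwise.1 hp).imp fun h he => h.ne (by rw [he])

lemma pathSum_abs_sub_of_isChain {F : α → ℝ} {p : List α} {a b : α}
    (hp : p.IsChain fun x y => F y < F x) (ha : p.head? = some a) (hb : p.getLast? = some b) :
    pathSum p (fun x y => |F x - F y|) = F a - F b :=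
  (pathSum_congr fun _ he => abs_of_pos (sub_pos.2 (hp.rel_of_mem_pathEdges he))).trans
    (pathSum_sub_eq F ha hb)

def UsesEdge (p : List α) (x y : α) : Prop := (x, y) ∈ pathEdges p ∨ (y, x) ∈ pathEdges p

lemma usesEdge_comm {p : List α} {x y : α} : UsesEdge p x y ↔ UsesEdge p y x := or_comm

variable [DecidableEq α]

instance (p : List α) (x y : α) : Decidable (UsesEdge p x y) :=
  inferInstanceAs (Decidable (_ ∨ _))

def edgeCount (p : List α) (x y : α) : ℕ := (pathEdges p).count (x, y)

lemma edgeCount_le_one {p : List α} (hp : p.Nodup) (x y : α) : edgeCount p x y ≤ 1 :=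
  List.nodup_iff_count_le_one.1 hp.pathEdges _

lemma edgeCount_pos {p : List α} {x y : α} : 0 < edgeCount p x y ↔ (x, y) ∈ pathEdges p :=
  List.count_pos_iff

lemma edgeCount_cons_cons (x y : α) (t : List α) (a b : α) :
    edgeCount (x :: y :: t) a b = edgeCount (y :: t) a b + if x = a ∧ y = b then 1 else 0 := by
  simp [edgeCount, List.count_cons]

lemma sum_edgeCount_sub_sum_edgeCount [Fintype α] : ∀ (p : List α) (w : α),
    ∑ y, (edgeCount p w y : ℝ) - ∑ y, (edgeCount p y w : ℝ) =
      (if p.head? = some w then 1 else 0) - (if p.getLast? = some w then 1 else 0)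
  | [], w => by simp [edgeCount]
  | [x], w => by simp [edgeCount]
  | x :: y :: t, w => by
    have ih := sum_edgeCount_sub_sum_edgeCount (y :: t) w
    have hout : ∑ z, (if x = w ∧ y = z then (1 : ℝ) else 0) = if x = w then 1 else 0 := by
      by_cases h : x = w <;> simp [h]
    have hin : ∑ z, (if x = z ∧ y = w then (1 : ℝ) else 0) = if y = w then 1 else 0 := by
      by_cases h : y = w <;> simp [h]
    simp only [edgeCount_cons_cons, Nat.cast_add, sum_add_distrib, Nat.cast_ite, Nat.cast_one,
      Nat.cast_zero, hout, hin, List.getLast?_cons_cons, List.head?_cons, Option.some.injEq] at ih ⊢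
    linarith

lemma sum_filter_usesEdge_le {ι : Type*} (s : Finset ι) (γ : ι → List α) {a : ι → ℝ}
    (ha : ∀ j ∈ s, 0 ≤ a j) (x y : α) :
    ∑ j ∈ s with UsesEdge (γ j) x y, a j ≤
      ∑ j ∈ s, a j * edgeCount (γ j) x y + ∑ j ∈ s, a j * edgeCount (γ j) y x := by
  rw [sum_filter, ← sum_add_distrib]
  refine sum_le_sum fun j hj => ?_
  have haj := ha j hj
  split_ifs with h
  · have h1 : 1 ≤ edgeCount (γ j) x y + edgeCount (γ j) y x := by
      rcases h with h | h
      all_goals have := edgeCount_pos.2 h; omega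
    have h1' : (1 : ℝ) ≤ edgeCount (γ j) x y + edgeCount (γ j) y x := by exact_mod_cast h1
    nlinarith
  · positivity

end Paths

section Decomposition

variable {α : Type} [DecidableEq α]

lemma sub_mul_edgeCount_nonneg {f : α → α → ℝ} {p : List α} {c : ℝ} (hp : p.Nodup)
    (hf : ∀ x y, 0 ≤ f x y) (hc : ∀ e ∈ pathEdges p, c ≤ f e.1 e.2) (x y : α) :
    0 ≤ f x y - c * edgeCount p x y := by
  rcases Nat.eq_zero_or_pos (edgeCount p x y) with h | h
  · simpa [h] using hf x y
  · have h1 : edgeCount p x y = 1 := le_antisymm (edgeCount_le_one hp x y) h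
    simpa [h1] using hc (x, y) (edgeCount_pos.1 h)

variable [Fintype α]

def netOutflow (f : α → α → ℝ) (w : α) : ℝ := ∑ y, f w y - ∑ y, f y w

lemma netOutflow_sub_mul_edgeCount (f : α → α → ℝ) (c : ℝ) (p : List α) (w : α) :
    netOutflow (fun x y => f x y - c * edgeCount p x y) w = netOutflow f w -
      c * ((if p.head? = some w then 1 else 0) - (if p.getLast? = some w then 1 else 0)) := by
  rw [← sum_edgeCount_sub_sum_edgeCount]
  simp only [netOutflow, sum_sub_distrib, ← mul_sum]
  ring

lemma card_pos_sub_mul_edgeCount_lt {f : α → α → ℝ} {p : List α} {e₀ : α × α}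
    (he₀ : e₀ ∈ pathEdges p) (hpos : 0 < f e₀.1 e₀.2) :
    #{e : α × α | 0 < f e.1 e.2 - f e₀.1 e₀.2 * edgeCount p e.1 e.2} <
      #{e : α × α | 0 < f e.1 e.2} := by
  refine card_lt_card ((ssubset_iff_of_subset fun e he => ?_).2 ⟨e₀, by simpa using hpos, ?_⟩)
  · simp only [mem_filter, mem_univ, true_and] at he ⊢
    exact he.trans_le (sub_le_self _ (by positivity))
  · have h1 : (1 : ℝ) ≤ edgeCount p e₀.1 e₀.2 := by exact_mod_cast edgeCount_pos.2 he₀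
    simp only [mem_filter, mem_univ, true_and, not_lt]
    nlinarith

variable (F : α → ℝ) {u v : α}

theorem exists_flow_path_of_pos {f : α → α → ℝ} (hf : ∀ x y, 0 ≤ f x y)
    (hdesc : ∀ x y, 0 < f x y → F y < F x) (hmax : ∀ x, F x ≤ F u)
    (hcons : ∀ w, w ≠ u → w ≠ v → netOutflow f w = 0) {w y : α} (hwy : 0 < f w y) :
    ∃ p : List α, p.head? = some w ∧ p.getLast? = some v ∧ p.IsChain (fun a b => 0 < f a b) := by
  by_cases hyv : y = v
  · exact ⟨[w, y], rfl, by simp [hyv], by simpa using hwy⟩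
  have hFy : F y < F w := hdesc w y hwy
  have hyu : y ≠ u := by
    rintro rfl
    exact (hFy.trans_le (hmax w)).false
  obtain ⟨z, -, hz⟩ : ∃ z ∈ univ, (0 : α → ℝ) z < f y z := by
    refine exists_lt_of_sum_lt ?_
    have hbal := hcons y hyu hyv
    rw [netOutflow, sub_eq_zero] at hbal
    simpa [hbal] using hwy.trans_le (single_le_sum (fun z _ => hf z y) (mem_univ w))
  obtain ⟨p, hp, hpv, hpc⟩ := exists_flow_path_of_pos hf hdesc hmax hcons hz
  match p, hp with
  | _ :: t, rfl =>
    exact ⟨w :: y :: t, rfl, by rwa [List.getLast?_cons_cons], List.isChain_cons_cons.2 ⟨hwy, hpc⟩⟩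
termination_by #{x | F x < F w}
decreasing_by
  refine card_lt_card ((ssubset_iff_of_subset fun x hx => ?_).2 ⟨y, by simpa using hFy, by simp⟩)
  simp only [mem_filter, mem_univ, true_and] at hx ⊢
  exact hx.trans hFy

theorem exists_path_decomposition (huv : u ≠ v) (hmax : ∀ x, F x ≤ F u) (f : α → α → ℝ)
    (hf : ∀ x y, 0 ≤ f x y) (hdesc : ∀ x y, 0 < f x y → F y < F x)
    (hcons : ∀ w, w ≠ u → w ≠ v → netOutflow f w = 0) :
    ∃ (n : ℕ) (γ : Fin n → List α) (a : Fin n → ℝ),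
      (∀ j, 0 < a j ∧ (γ j).head? = some u ∧ (γ j).getLast? = some v ∧
        (γ j).IsChain (fun x y => 0 < f x y)) ∧
      (∀ x y, ∑ j, a j * edgeCount (γ j) x y ≤ f x y) ∧ ∑ j, a j = netOutflow f u := by
  by_cases hout : ∀ y, f u y ≤ 0
  · have hin : ∀ y, f y u = 0 := fun y =>
      (hf y u).antisymm' (not_lt.1 fun h => (hdesc y u h).not_ge (hmax y))
    refine ⟨0, Fin.elim0, Fin.elim0, Fin.rec0, fun x y => by simpa using hf x y, ?_⟩
    simp [netOutflow, hin, fun y => (hout y).antisymm (hf u y)]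
  simp only [not_forall, not_le] at hout
  obtain ⟨y, hy⟩ := hout
  obtain ⟨p, hpu, hpv, hpc⟩ := exists_flow_path_of_pos F hf hdesc hmax hcons hy
  have hnd : p.Nodup := (hpc.imp fun x y h => hdesc x y h).nodup_of_lt
  obtain ⟨e₀, he₀, hmin⟩ := (pathEdges p).toFinset.exists_min_image (fun e => f e.1 e.2)
    (List.toFinset_nonempty_iff _ |>.2 (pathEdges_ne_nil hpu hpv huv))
  rw [List.mem_toFinset] at he₀
  -- peel off `p` carrying the bottleneck value `c`; this removes `e₀` from the support of `f`
  set c := f e₀.1 e₀.2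
  have hc : 0 < c := hpc.rel_of_mem_pathEdges he₀
  set g : α → α → ℝ := fun x y => f x y - c * edgeCount p x y with hg_def
  have hgf : ∀ x y, g x y ≤ f x y := fun x y => sub_le_self _ (by positivity)
  have hg : ∀ x y, 0 ≤ g x y :=
    sub_mul_edgeCount_nonneg hnd hf fun e he => hmin e (List.mem_toFinset.2 he)
  have hgcons : ∀ w, w ≠ u → w ≠ v → netOutflow g w = 0 := fun w hwu hwv => by
    simp [g, netOutflow_sub_mul_edgeCount, hcons w hwu hwv, hpu, hpv, Ne.symm hwu, Ne.symm hwv]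
  have hfewer := card_pos_sub_mul_edgeCount_lt he₀ hc
  obtain ⟨n, γ, a, hγ, hload, htotal⟩ := exists_path_decomposition huv hmax g hg
    (fun x y h => hdesc x y (h.trans_le (hgf x y))) hgcons
  refine ⟨n + 1, Fin.cons p γ, Fin.cons c a, Fin.cases ⟨hc, hpu, hpv, hpc⟩ fun j => ?paths,
    fun x y => ?load, ?total⟩
  case paths =>
    obtain ⟨ha, hu, hv, hchain⟩ := hγ j
    simp only [Fin.cons_succ]
    exact ⟨ha, hu, hv, hchain.imp fun x y h => h.trans_le (hgf x y)⟩
  case load =>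
    have := hload x y
    rw [Fin.sum_univ_succ]
    simp only [Fin.cons_zero, Fin.cons_succ, g] at this ⊢
    linarith
  case total =>
    rw [Fin.sum_cons, htotal, hg_def, netOutflow_sub_mul_edgeCount]
    simp [hpu, hpv, huv.symm]
termination_by #{e : α × α | 0 < f e.1 e.2}
decreasing_by exact hfewer

end Decomposition

section Potential

variable {α : Type} (adj : α → α → Prop) [DecidableRel adj] (r : α → α → ℝ)

noncomputable def conductance (x y : α) : ℝ := if adj x y then (r x y)⁻¹ else 0

noncomputable def current (F : α → ℝ) (x y : α) : ℝ := conductance adj r x y * (F x - F y)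

variable {adj r}

lemma conductance_nonneg (hrpos : ∀ x y, adj x y → 0 < r x y) (x y : α) :
    0 ≤ conductance adj r x y := by
  unfold conductance
  split_ifs with h
  exacts [(inv_pos.2 (hrpos x y h)).le, le_rfl]

lemma conductance_comm (hadj : ∀ x y, adj x y → adj y x) (hrsym : ∀ x y, r x y = r y x)
    (x y : α) : conductance adj r x y = conductance adj r y x := by
  have : adj x y ↔ adj y x := ⟨hadj x y, hadj y x⟩
  simp [conductance, this, hrsym x y]

lemma current_antisymm (hadj : ∀ x y, adj x y → adj y x) (hrsym : ∀ x y, r x y = r y x)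
    (F : α → ℝ) (x y : α) : current adj r F y x = -current adj r F x y := by
  rw [current, current, conductance_comm hadj hrsym]
  ring

variable (adj r) [Fintype α]

noncomputable def dirichletEnergy (F : α → ℝ) : ℝ :=
  1 / 2 * ∑ x, ∑ y, conductance adj r x y * (F x - F y) ^ 2

variable {adj r}

lemma dirichletEnergy_nonneg (hrpos : ∀ x y, adj x y → 0 < r x y) (F : α → ℝ) :
    0 ≤ dirichletEnergy adj r F :=
  mul_nonneg (by norm_num) <| sum_nonneg fun x _ => sum_nonneg fun y _ =>
    mul_nonneg (conductance_nonneg hrpos x y) (sq_nonneg _)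

lemma effCond_le_dirichletEnergy (hrpos : ∀ x y, adj x y → 0 < r x y) {u v : α} {F : α → ℝ}
    (hFu : F u = 1) (hFv : F v = 0) : effCond adj r u v ≤ dirichletEnergy adj r F :=
  csInf_le ⟨0, by rintro _ ⟨G, -, -, rfl⟩; exact dirichletEnergy_nonneg hrpos G⟩ ⟨F, hFu, hFv, rfl⟩

lemma dirichletEnergy_le_of_abs_sub_le (hrpos : ∀ x y, adj x y → 0 < r x y) {F G : α → ℝ}
    (h : ∀ x y, |F x - F y| ≤ |G x - G y|) : dirichletEnergy adj r F ≤ dirichletEnergy adj r G := by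
  refine mul_le_mul_of_nonneg_left (sum_le_sum fun x _ => sum_le_sum fun y _ => ?_) (by norm_num)
  exact mul_le_mul_of_nonneg_left (sq_le_sq.2 (h x y)) (conductance_nonneg hrpos x y)

theorem exists_dirichletEnergy_minimizer (hrpos : ∀ x y, adj x y → 0 < r x y) {u v : α}
    (huv : u ≠ v) : ∃ F : α → ℝ, F u = 1 ∧ F v = 0 ∧ (∀ x, F x ≤ 1) ∧
      ∀ G : α → ℝ, G u = 1 → G v = 0 → dirichletEnergy adj r F ≤ dirichletEnergy adj r G := by
  classical
  set K : Set (α → ℝ) := {G | G u = 1 ∧ G v = 0} ∩ Set.univ.pi fun _ => Set.Icc 0 1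
  have hK : IsCompact K := (isCompact_univ_pi fun _ => isCompact_Icc).inter_left
    ((isClosed_eq (continuous_apply u) continuous_const).inter
      (isClosed_eq (continuous_apply v) continuous_const))
  have hne : K.Nonempty := ⟨fun x => if x = u then 1 else 0, ⟨by simp, by simp [huv.symm]⟩,
    fun x _ => by by_cases hx : x = u <;> simp [hx]⟩
  have hcont : Continuous (dirichletEnergy adj r) := by
    unfold dirichletEnergy
    fun_prop
  obtain ⟨F, ⟨⟨hFu, hFv⟩, hF⟩, hmin⟩ := hK.exists_isMinOn hne hcont.continuousOn
  refine ⟨F, hFu, hFv, fun x => (hF x trivial).2, fun G hGu hGv => ?_⟩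
  -- truncating `G` to `[0, 1]` keeps the boundary values and does not increase the energy
  set G' : α → ℝ := fun x => Set.projIcc 0 1 zero_le_one (G x)
  calc dirichletEnergy adj r F ≤ dirichletEnergy adj r G' :=
        hmin ⟨⟨by simp [G', hGu], by simp [G', hGv]⟩, fun x _ => Subtype.prop _⟩
    _ ≤ dirichletEnergy adj r G :=
        dirichletEnergy_le_of_abs_sub_le hrpos fun x y => Set.abs_projIcc_sub_projIcc _

variable (hadj : ∀ x y, adj x y → adj y x) (hrsym : ∀ x y, r x y = r y x)
include hadj hrsym

lemma sum_sum_current_mul_sub (F G : α → ℝ) :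
    ∑ x, ∑ y, current adj r F x y * (G x - G y) = 2 * ∑ x, G x * ∑ y, current adj r F x y := by
  have h : ∑ x, ∑ y, current adj r F x y * G y = -∑ x, G x * ∑ y, current adj r F x y := by
    rw [sum_comm]
    simp only [mul_sum, ← sum_neg_distrib]
    exact sum_congr rfl fun x _ => sum_congr rfl fun y _ => by
      rw [current_antisymm hadj hrsym]
      ring
  have h' : ∑ x, ∑ y, current adj r F x y * G x = ∑ x, G x * ∑ y, current adj r F x y :=
    sum_congr rfl fun x _ => by rw [mul_sum]; exact sum_congr rfl fun y _ => mul_comm _ _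
  simp only [mul_sub, sum_sub_distrib, h, h']
  ring

lemma dirichletEnergy_eq_sum_mul_sum_current (F : α → ℝ) :
    dirichletEnergy adj r F = ∑ x, F x * ∑ y, current adj r F x y := by
  have hsq : ∑ x, ∑ y, conductance adj r x y * (F x - F y) ^ 2 =
      ∑ x, ∑ y, current adj r F x y * (F x - F y) := by
    simp only [current, sq, mul_assoc]
  rw [dirichletEnergy, hsq, sum_sum_current_mul_sub hadj hrsym]
  ring

lemma dirichletEnergy_add_smul (F G : α → ℝ) (t : ℝ) :
    dirichletEnergy adj r (F + t • G) = dirichletEnergy adj r F +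
      2 * t * ∑ x, G x * ∑ y, current adj r F x y + t ^ 2 * dirichletEnergy adj r G := by
  rw [mul_comm 2 t, mul_assoc, ← sum_sum_current_mul_sub hadj hrsym]
  simp only [dirichletEnergy, current, mul_sum, ← sum_add_distrib]
  refine sum_congr rfl fun x _ => sum_congr rfl fun y _ => ?_
  simp only [Pi.add_apply, Pi.smul_apply, smul_eq_mul]
  ring

theorem sum_current_eq_zero_of_minimizer {u v : α} {F : α → ℝ} (hFu : F u = 1) (hFv : F v = 0)
    (hmin : ∀ G : α → ℝ, G u = 1 → G v = 0 → dirichletEnergy adj r F ≤ dirichletEnergy adj r G)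
    {w : α} (hwu : w ≠ u) (hwv : w ≠ v) : ∑ y, current adj r F w y = 0 := by
  classical
  set δ : α → ℝ := Pi.single w 1
  have hδ : ∑ x, δ x * ∑ y, current adj r F x y = ∑ y, current adj r F w y := by
    simp [δ, Pi.single_apply]
  -- `t ↦ dirichletEnergy (F + t • δ)` is a quadratic polynomial minimal at `t = 0`
  have hquad : ∀ t : ℝ, 0 ≤ dirichletEnergy adj r δ * (t * t) +
      2 * (∑ y, current adj r F w y) * t + 0 := fun t => by
    have := hmin (F + t • δ) (by simp [δ, hFu, hwu.symm]) (by simp [δ, hFv, hwv.symm])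
    rw [dirichletEnergy_add_smul hadj hrsym, hδ] at this
    nlinarith
  have h := discrim_le_zero hquad
  rw [discrim, mul_zero, sub_zero] at h
  simpa using le_antisymm h (sq_nonneg _)

lemma dirichletEnergy_eq_sum_current {u v : α} {F : α → ℝ} (hFu : F u = 1) (hFv : F v = 0)
    (hharm : ∀ w, w ≠ u → w ≠ v → ∑ y, current adj r F w y = 0) :
    dirichletEnergy adj r F = ∑ y, current adj r F u y := by
  rw [dirichletEnergy_eq_sum_mul_sum_current hadj hrsym, sum_eq_single u, hFu, one_mul]
  · intro w _ hwu
    by_cases hwv : w = v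
    · rw [hwv, hFv, zero_mul]
    · rw [hharm w hwu hwv, mul_zero]
  · simp

end Potential

section RestrictedResistance

variable {α : Type}

structure IsAdmissibleSplitting (adj : α → α → Prop) (r : α → α → ℝ) (P : Finset (List α))
    (rP : List α → α → α → ℝ) : Prop where
  pos : ∀ p ∈ P, ∀ x y, adj x y → 0 < rP p x y
  symm : ∀ p ∈ P, ∀ x y, rP p x y = rP p y x
  sum_inv_le : ∀ x y, adj x y → ∑ p ∈ P, (rP p x y)⁻¹ ≤ (r x y)⁻¹

variable {adj : α → α → Prop} {r : α → α → ℝ} {P : Finset (List α)} {rP : List α → α → α → ℝ}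
  {u v : α}

lemma IsPathBetween.pathSum_pos {p : List α} (hp : IsPathBetween adj u v p) (huv : u ≠ v)
    {w : α → α → ℝ} (hw : ∀ x y, adj x y → 0 < w x y) : 0 < pathSum p w :=
  _root_.pathSum_pos (pathEdges_ne_nil hp.2.1 hp.2.2.1 huv) fun _ he =>
    hw _ _ (List.IsChain.rel_of_mem_pathEdges hp.2.2.2 he)

lemma IsAdmissibleSplitting.le (h : IsAdmissibleSplitting adj r P rP)
    (hrpos : ∀ x y, adj x y → 0 < r x y) {p : List α} (hp : p ∈ P) {x y : α} (hxy : adj x y) :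
    r x y ≤ rP p x y := by
  have hinv : (rP p x y)⁻¹ ≤ (r x y)⁻¹ :=
    (single_le_sum (f := fun q => (rP q x y)⁻¹)
      (fun q hq => (inv_pos.2 (h.pos q hq x y hxy)).le) hp).trans (h.sum_inv_le x y hxy)
  exact (inv_le_inv₀ (h.pos p hp x y hxy) (hrpos x y hxy)).1 hinv

lemma inv_sum_inv_pathSum_nonneg (hP : ∀ p ∈ P, IsPathBetween adj u v p)
    (hpos : ∀ p ∈ P, ∀ x y, adj x y → 0 < rP p x y) :
    0 ≤ (∑ p ∈ P, (pathSum p (rP p))⁻¹)⁻¹ :=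
  inv_nonneg.2 <| sum_nonneg fun p hp => inv_nonneg.2 <| pathSum_nonneg fun _ he =>
    (hpos p hp _ _ (List.IsChain.rel_of_mem_pathEdges (hP p hp).2.2.2 he)).le

lemma restrictedResP_nonneg (hP : ∀ p ∈ P, IsPathBetween adj u v p) :
    0 ≤ restrictedResP adj r P :=
  Real.sInf_nonneg <| by
    rintro _ ⟨rP, hpos, -, -, rfl⟩
    exact inv_sum_inv_pathSum_nonneg hP hpos

lemma restrictedResP_le (hP : ∀ p ∈ P, IsPathBetween adj u v p)
    (h : IsAdmissibleSplitting adj r P rP) :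
    restrictedResP adj r P ≤ (∑ p ∈ P, (pathSum p (rP p))⁻¹)⁻¹ :=
  csInf_le ⟨0, by rintro _ ⟨rP, hpos, -, -, rfl⟩; exact inv_sum_inv_pathSum_nonneg hP hpos⟩
    ⟨rP, h.pos, h.symm, h.sum_inv_le, rfl⟩

lemma restrictedResP_pos (hrpos : ∀ x y, adj x y → 0 < r x y) (huv : u ≠ v)
    (hP : ∀ p ∈ P, IsPathBetween adj u v p) (hne : P.Nonempty)
    (h : IsAdmissibleSplitting adj r P rP) : 0 < restrictedResP adj r P := by
  have hr : ∀ p ∈ P, 0 < pathSum p r := fun p hp => (hP p hp).pathSum_pos huv hrpos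
  refine (inv_pos.2 (sum_pos (fun p hp => inv_pos.2 (hr p hp)) hne)).trans_le
    (le_csInf ⟨_, rP, h.pos, h.symm, h.sum_inv_le, rfl⟩ ?_)
  rintro _ ⟨rP', hpos, hsymm, hsum, rfl⟩
  have h' : IsAdmissibleSplitting adj r P rP' := ⟨hpos, hsymm, hsum⟩
  refine inv_anti₀ (sum_pos (fun p hp => inv_pos.2 ((hP p hp).pathSum_pos huv (hpos p hp))) hne)
    (sum_le_sum fun p hp => inv_anti₀ (hr p hp) (pathSum_le_pathSum fun _ he => ?_))
  exact h'.le hrpos hp (List.IsChain.rel_of_mem_pathEdges (hP p hp).2.2.2 he)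

theorem sum_inv_pathSum_le_inv_restrictedResP (hrpos : ∀ x y, adj x y → 0 < r x y)
    (huv : u ≠ v) (hP : ∀ p ∈ P, IsPathBetween adj u v p) (h : IsAdmissibleSplitting adj r P rP) :
    ∑ p ∈ P, (pathSum p (rP p))⁻¹ ≤ (restrictedResP adj r P)⁻¹ := by
  rcases P.eq_empty_or_nonempty with rfl | hne
  · simpa using restrictedResP_nonneg hP
  have hS : 0 < ∑ p ∈ P, (pathSum p (rP p))⁻¹ :=
    sum_pos (fun p hp => inv_pos.2 ((hP p hp).pathSum_pos huv (h.pos p hp))) hne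
  exact (le_inv_comm₀ (restrictedResP_pos hrpos huv hP hne h) hS).1 (restrictedResP_le hP h)

end RestrictedResistance

section Packing

variable {α : Type} {ι : Type*} [DecidableEq α] (r : α → α → ℝ) (P : Finset (List α)) (J : Finset ι)
  (γ : ι → List α) (a : ι → ℝ) (ℓ : α → α → ℝ)

def pathLoad (p : List α) (x y : α) : ℝ := ∑ j ∈ J with γ j = p ∧ UsesEdge p x y, a j

/-- On an edge `e`, path `p` gets the conductance `t * pathLoad p e / ℓ e`, which carries a
`t`-fraction of its load across the drop `ℓ e`, plus an equal share of the remaining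
`(1 - t) * (r e)⁻¹`, which keeps every share positive. -/
noncomputable def mixedSplitting (t : ℝ) (p : List α) (x y : α) : ℝ :=
  (t * pathLoad J γ a p x y / ℓ x y + (1 - t) * (r x y)⁻¹ / #P)⁻¹

lemma sum_pathLoad (hγ : ∀ j ∈ J, γ j ∈ P) (x y : α) :
    ∑ p ∈ P, pathLoad J γ a p x y = ∑ j ∈ J with UsesEdge (γ j) x y, a j := by
  rw [← sum_fiberwise_of_maps_to (g := γ) fun j hj => hγ j (mem_filter.1 hj).1]
  refine sum_congr rfl fun p _ => ?_
  rw [pathLoad, filter_filter]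
  exact sum_congr (filter_congr fun j _ =>
    ⟨fun ⟨h1, h2⟩ => ⟨h1 ▸ h2, h1⟩, fun ⟨h1, h2⟩ => ⟨h2, h2 ▸ h1⟩⟩) fun _ _ => rfl

lemma pathLoad_of_mem_pathEdges {p : List α} {e : α × α} (he : e ∈ pathEdges p) :
    pathLoad J γ a p e.1 e.2 = ∑ j ∈ J with γ j = p, a j := by
  simp only [pathLoad, show UsesEdge p e.1 e.2 from Or.inl he, and_true]

variable {r P J γ a ℓ} {adj : α → α → Prop} {u v : α}

theorem isAdmissibleSplitting_mixedSplitting (hrpos : ∀ x y, adj x y → 0 < r x y)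
    (hrsym : ∀ x y, r x y = r y x) (hγ : ∀ j ∈ J, γ j ∈ P) (ha : ∀ j ∈ J, 0 ≤ a j)
    (hℓ : ∀ x y, 0 ≤ ℓ x y) (hℓsymm : ∀ x y, ℓ x y = ℓ y x)
    (hload : ∀ x y, adj x y → ∑ j ∈ J with UsesEdge (γ j) x y, a j ≤ (r x y)⁻¹ * ℓ x y)
    {t : ℝ} (ht0 : 0 ≤ t) (ht1 : t < 1) :
    IsAdmissibleSplitting adj r P (mixedSplitting r P J γ a ℓ t) where
  pos p hp x y hxy := by
    have : 0 ≤ pathLoad J γ a p x y := sum_nonneg fun j hj => ha j (mem_filter.1 hj).1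
    have := hrpos x y hxy
    have : (0 : ℝ) < #P := by exact_mod_cast card_pos.2 ⟨p, hp⟩
    have := hℓ x y
    have : 0 < 1 - t := by linarith
    unfold mixedSplitting
    positivity
  symm p _ x y := by
    simp only [mixedSplitting, pathLoad, usesEdge_comm (x := x), hrsym x y, hℓsymm x y]
  sum_inv_le x y hxy := by
    simp only [mixedSplitting, inv_inv, sum_add_distrib, mul_div_assoc, ← mul_sum, ← sum_div,
      sum_pathLoad P J γ a hγ, sum_const, nsmul_eq_mul]
    have hc := inv_pos.2 (hrpos x y hxy)
    have h1 : (∑ j ∈ J with UsesEdge (γ j) x y, a j) / ℓ x y ≤ (r x y)⁻¹ :=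
      div_le_of_le_mul₀ (hℓ x y) hc.le (hload x y hxy)
    have h2 : (#P : ℝ) * ((r x y)⁻¹ / #P) ≤ (r x y)⁻¹ := by
      rcases eq_or_ne (#P : ℝ) 0 with h | h
      · rw [h, zero_mul]
        exact hc.le
      · rw [mul_div_cancel₀ _ h]
    nlinarith [mul_le_mul_of_nonneg_left h1 ht0, mul_le_mul_of_nonneg_left h2 (sub_nonneg.2 ht1.le)]

theorem mul_sum_le_inv_pathSum_mixedSplitting (hrpos : ∀ x y, adj x y → 0 < r x y)
    (huv : u ≠ v) (hP : ∀ p ∈ P, IsPathBetween adj u v p) (ha : ∀ j ∈ J, 0 < a j)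
    (hℓpos : ∀ j ∈ J, ∀ e ∈ pathEdges (γ j), 0 < ℓ e.1 e.2) (hℓlen : ∀ j ∈ J, pathSum (γ j) ℓ ≤ 1)
    {t : ℝ} (ht0 : 0 < t) (ht1 : t ≤ 1)
    (hsplit : IsAdmissibleSplitting adj r P (mixedSplitting r P J γ a ℓ t)) {p : List α}
    (hp : p ∈ P) :
    t * ∑ j ∈ J with γ j = p, a j ≤ (pathSum p (mixedSplitting r P J γ a ℓ t p))⁻¹ := by
  have hpos : 0 < pathSum p (mixedSplitting r P J γ a ℓ t p) :=
    (hP p hp).pathSum_pos huv (hsplit.pos p hp)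
  rcases (J.filter (γ · = p)).eq_empty_or_nonempty with hJ | ⟨j, hj⟩
  · rw [hJ, sum_empty, mul_zero]
    exact (inv_pos.2 hpos).le
  obtain ⟨hjJ, rfl⟩ := mem_filter.1 hj
  set A := ∑ i ∈ J with γ i = γ j, a i
  have hA : 0 < t * A := mul_pos ht0 (sum_pos (fun i hi => ha i (mem_filter.1 hi).1) ⟨j, hj⟩)
  have hedge : ∀ e ∈ pathEdges (γ j),
      mixedSplitting r P J γ a ℓ t (γ j) e.1 e.2 ≤ (t * A)⁻¹ * ℓ e.1 e.2 := fun e he => by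
    have hℓe := hℓpos j hjJ e he
    have hr := hrpos _ _ (List.IsChain.rel_of_mem_pathEdges (hP _ hp).2.2.2 he)
    have : 0 ≤ 1 - t := sub_nonneg.2 ht1
    rw [mixedSplitting, pathLoad_of_mem_pathEdges J γ a he]
    calc _ ≤ (t * A / ℓ e.1 e.2)⁻¹ :=
          inv_anti₀ (by positivity) (le_add_of_nonneg_right (by positivity))
      _ = (t * A)⁻¹ * ℓ e.1 e.2 := by rw [inv_div, div_eq_inv_mul]
  have hlen : pathSum (γ j) (mixedSplitting r P J γ a ℓ t (γ j)) ≤ (t * A)⁻¹ := by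
    calc _ ≤ pathSum (γ j) fun x y => (t * A)⁻¹ * ℓ x y := pathSum_le_pathSum hedge
      _ = (t * A)⁻¹ * pathSum (γ j) ℓ := pathSum_mul_left _ _ _
      _ ≤ (t * A)⁻¹ := mul_le_of_le_one_right (inv_pos.2 hA).le (hℓlen j hjJ)
  exact (le_inv_comm₀ hpos hA).1 hlen

theorem sum_le_inv_restrictedResP (hrpos : ∀ x y, adj x y → 0 < r x y)
    (hrsym : ∀ x y, r x y = r y x) (huv : u ≠ v) (hP : ∀ p ∈ P, IsPathBetween adj u v p)
    (hγ : ∀ j ∈ J, γ j ∈ P) (ha : ∀ j ∈ J, 0 < a j) (hℓ : ∀ x y, 0 ≤ ℓ x y)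
    (hℓsymm : ∀ x y, ℓ x y = ℓ y x) (hℓpos : ∀ j ∈ J, ∀ e ∈ pathEdges (γ j), 0 < ℓ e.1 e.2)
    (hℓlen : ∀ j ∈ J, pathSum (γ j) ℓ ≤ 1)
    (hload : ∀ x y, adj x y → ∑ j ∈ J with UsesEdge (γ j) x y, a j ≤ (r x y)⁻¹ * ℓ x y) :
    ∑ j ∈ J, a j ≤ (restrictedResP adj r P)⁻¹ := by
  have key : ∀ t ∈ Set.Ioo (0 : ℝ) 1, t * ∑ j ∈ J, a j ≤ (restrictedResP adj r P)⁻¹ := by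
    rintro t ⟨ht0, ht1⟩
    have hsplit := isAdmissibleSplitting_mixedSplitting hrpos hrsym hγ (fun j hj => (ha j hj).le)
      hℓ hℓsymm hload ht0.le ht1
    calc t * ∑ j ∈ J, a j = ∑ p ∈ P, t * ∑ j ∈ J with γ j = p, a j := by
          rw [← mul_sum, sum_fiberwise_of_maps_to hγ]
      _ ≤ ∑ p ∈ P, (pathSum p (mixedSplitting r P J γ a ℓ t p))⁻¹ := sum_le_sum fun p hp =>
          mul_sum_le_inv_pathSum_mixedSplitting hrpos huv hP ha hℓpos hℓlen ht0 ht1.le hsplit hp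
      _ ≤ (restrictedResP adj r P)⁻¹ := sum_inv_pathSum_le_inv_restrictedResP hrpos huv hP hsplit
  refine le_of_tendsto (x := 𝓝[<] 1) (f := fun t => t * ∑ j ∈ J, a j) ?_
    (eventually_of_mem (Ioo_mem_nhdsLT zero_lt_one) key)
  simpa using ((continuous_mul_const (∑ j ∈ J, a j)).tendsto 1).mono_left nhdsWithin_le_nhds

end Packing

theorem exists_current_path_decomposition {α : Type} [Fintype α] [DecidableEq α]
    {adj : α → α → Prop} [DecidableRel adj] {r : α → α → ℝ} (hadj : ∀ x y, adj x y → adj y x)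
    (hrsym : ∀ x y, r x y = r y x) (hrpos : ∀ x y, adj x y → 0 < r x y) {u v : α} (huv : u ≠ v)
    {F : α → ℝ} (hFu : F u = 1) (hFv : F v = 0) (hF : ∀ x, F x ≤ 1)
    (hharm : ∀ w, w ≠ u → w ≠ v → ∑ y, current adj r F w y = 0) :
    ∃ (n : ℕ) (γ : Fin n → List α) (a : Fin n → ℝ),
      (∀ j, 0 < a j ∧ IsPathBetween adj u v (γ j) ∧ (γ j).IsChain (fun x y => F y < F x)) ∧
      (∀ x y, adj x y → ∑ j with UsesEdge (γ j) x y, a j ≤ (r x y)⁻¹ * |F x - F y|) ∧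
      ∑ j, a j = dirichletEnergy adj r F := by
  set f : α → α → ℝ := fun x y => max (current adj r F x y) 0
  have hf : ∀ x y, 0 < f x y → adj x y ∧ F y < F x := fun x y h => by
    have h' : 0 < current adj r F x y := by simpa [f] using h
    unfold current conductance at h'
    split_ifs at h' with hxy
    · exact ⟨hxy, sub_pos.1 ((pos_iff_pos_of_mul_pos h').1 (inv_pos.2 (hrpos x y hxy)))⟩
    · simp at h'
  have hnet : ∀ w, netOutflow f w = ∑ y, current adj r F w y := fun w => by
    rw [netOutflow, ← sum_sub_distrib]
    refine sum_congr rfl fun y _ => ?_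
    simp only [f, current_antisymm hadj hrsym F w y]
    exact max_zero_sub_max_neg_zero_eq_self _
  obtain ⟨n, γ, a, hγ, hload, htotal⟩ := exists_path_decomposition F huv (fun x => hFu ▸ hF x) f
    (fun _ _ => le_max_right _ _) (fun x y h => (hf x y h).2)
    fun w hwu hwv => (hnet w).trans (hharm w hwu hwv)
  refine ⟨n, γ, a, fun j => ?_, fun x y hxy => ?_, ?_⟩
  · obtain ⟨ha, hu, hv, hc⟩ := hγ j
    refine ⟨ha, ⟨?_, hu, hv, hc.imp fun x y h => (hf x y h).1⟩, hc.imp fun x y h => (hf x y h).2⟩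
    intro h
    simp [h] at hu
  · calc _ ≤ _ := sum_filter_usesEdge_le univ γ (fun j _ => (hγ j).1.le) x y
      _ ≤ f x y + f y x := add_le_add (hload x y) (hload y x)
      _ = |current adj r F x y| := by
        simp only [f, current_antisymm hadj hrsym F x y]
        exact max_zero_add_max_neg_zero_eq_abs_self _
      _ = (r x y)⁻¹ * |F x - F y| := by
        rw [current, conductance, if_pos hxy, abs_mul, abs_of_pos (inv_pos.2 (hrpos x y hxy))]
  · rw [htotal, hnet, dirichletEnergy_eq_sum_current hadj hrsym hFu hFv hharm]

theorem effCond_le_sum_inv_restricted_general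
    (adj : V → V → Prop) [DecidableRel adj] (r : V → V → ℝ)
    (hadj : ∀ x y, adj x y → adj y x)
    (hrsym : ∀ x y, r x y = r y x)
    (hrpos : ∀ x y, adj x y → 0 < r x y)
    (u v : V) (huv : u ≠ v)
    (k : ℕ) (Ps : Fin k → Finset (List V))
    (hpaths : ∀ i, ∀ p ∈ Ps i, IsPathBetween adj u v p)
    (hcover : ∀ p : List V, IsPathBetween adj u v p → p.Nodup → ∃ i, p ∈ Ps i) :
    effCond adj r u v ≤ ∑ i, (restrictedResP adj r (Ps i))⁻¹ := by
  obtain ⟨F, hFu, hFv, hF, hmin⟩ := exists_dirichletEnergy_minimizer hrpos huv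
  obtain ⟨n, γ, a, hγ, hload, htotal⟩ := exists_current_path_decomposition hadj hrsym hrpos huv
    hFu hFv hF fun w => sum_current_eq_zero_of_minimizer hadj hrsym hFu hFv hmin
  choose idx hidx using fun j => hcover (γ j) (hγ j).2.1 (hγ j).2.2.nodup_of_lt
  have hlen : ∀ j, pathSum (γ j) (fun x y => |F x - F y|) = 1 := fun j => by
    rw [pathSum_abs_sub_of_isChain (hγ j).2.2 (hγ j).2.1.2.1 (hγ j).2.1.2.2.1, hFu, hFv, sub_zero]
  have hbound : ∀ i, ∑ j with idx j = i, a j ≤ (restrictedResP adj r (Ps i))⁻¹ := fun i =>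
    sum_le_inv_restrictedResP hrpos hrsym huv (hpaths i) (fun j hj => (mem_filter.1 hj).2 ▸ hidx j)
      (fun j _ => (hγ j).1) (fun x y => abs_nonneg _) (fun x y => abs_sub_comm _ _)
      (fun j _ e he => abs_pos.2 (sub_pos.2 ((hγ j).2.2.rel_of_mem_pathEdges he)).ne')
      (fun j _ => (hlen j).le) fun x y hxy => (sum_le_sum_of_subset_of_nonneg
        (filter_subset_filter _ (filter_subset _ _)) fun j _ _ => (hγ j).1.le).trans (hload x y hxy)
  calc effCond adj r u v ≤ dirichletEnergy adj r F := effCond_le_dirichletEnergy hrpos hFu hFv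
    _ = ∑ i, ∑ j with idx j = i, a j := by rw [sum_fiberwise, htotal]
    _ ≤ ∑ i, (restrictedResP adj r (Ps i))⁻¹ := sum_le_sum fun i _ => hbound i

/-- Lemma 2.5: if `Ps 1, ..., Ps k` are collections of `u`-`v` paths such that every (simple)
path from `u` to `v` belongs to some `Ps i`, then
`C(u, v) ≤ ∑ i, R(Ps i)⁻¹`. -/
theorem effCond_le_sum_inv_restricted
    (adj : V → V → Prop) [DecidableRel adj] (r : V → V → ℝ)
    (hadj : ∀ x y, adj x y → adj y x)
    (hrsym : ∀ x y, r x y = r y x)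
    (hrpos : ∀ x y, adj x y → 0 < r x y)
    (hconn : ∀ x y : V, ∃ p : List V, IsPathBetween adj x y p)
    (u v : V) (huv : u ≠ v)
    (k : ℕ) (Ps : Fin k → Finset (List V))
    (hpaths : ∀ i, ∀ p ∈ Ps i, IsPathBetween adj u v p)
    (hcover : ∀ p : List V, IsPathBetween adj u v p → p.Nodup → ∃ i, p ∈ Ps i) :
    effCond adj r u v ≤ ∑ i, (restrictedResP adj r (Ps i))⁻¹ :=
  effCond_le_sum_inv_restricted_general adj r hadj hrsym hrpos u v huv k Ps hpaths hcover
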